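/- arXiv:1110.0124 — 3 statements merged into one kernel-verified Lean document; each statement's English description precedes it below -/
import Mathlib

section
/- (Multi-letter converse inequality for Class I, single-user rate; key step in the proof of Theorem 2.) Let N be a positive integer and ε ≥ 0. Let M, W_1, …, W_N, Y_1, …, Y_N be random variables with values in finite sets such that (i) for every n ∈ {1,…,N}, W_n is independent of the pair (M, (W_{n+1},…,W_N)), and (ii) H(M | Y_1,…,Y_N) ≤ N ε (Fano-type condition). For each n define the auxiliary random variable V_n = (M, W_{n+1},…,W_N, Y_1,…,Y_{n−1}). Then H(M) ≤ Σ_{n=1}^N [ I(V_n; Y_n) − I(V_n; W_n) ] + N ε. -/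
open scoped Classical BigOperators
open Real

noncomputable section

/-- `p` is a probability mass function on a finite type. -/
def IsPMF {α : Type*} [Fintype α] (p : α → ℝ) : Prop :=
  (∀ a, 0 ≤ p a) ∧ ∑ a, p a = 1

/-- Base-2 Shannon entropy of a pmf on a finite type. -/
def entPMF {α : Type*} [Fintype α] (p : α → ℝ) : ℝ :=
  ∑ a, -(p a * Real.logb 2 (p a))

/-- Distribution (pushforward pmf) of a random variable `X` under the pmf `p`. -/
def distRV {Ω α : Type*} [Fintype Ω] (p : Ω → ℝ) (X : Ω → α) : α → ℝ :=
  fun a => ∑ ω, if X ω = a then p ω else 0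

/-- Shannon entropy `H(X)` of a random variable (base 2). -/
def entRV {Ω α : Type*} [Fintype Ω] [Fintype α] (p : Ω → ℝ) (X : Ω → α) : ℝ :=
  entPMF (distRV p X)

/-- Conditional entropy `H(X|Y)` (base 2). -/
def condEnt {Ω α β : Type*} [Fintype Ω] [Fintype α] [Fintype β]
    (p : Ω → ℝ) (X : Ω → α) (Y : Ω → β) : ℝ :=
  entRV p (fun ω => (X ω, Y ω)) - entRV p Y

/-- Mutual information `I(X;Y)` (base 2). -/
def mutInfo {Ω α β : Type*} [Fintype Ω] [Fintype α] [Fintype β]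
    (p : Ω → ℝ) (X : Ω → α) (Y : Ω → β) : ℝ :=
  entRV p X + entRV p Y - entRV p (fun ω => (X ω, Y ω))

/-- Conditional mutual information `I(X;Y|Z)` (base 2). -/
def condMutInfo {Ω α β γ : Type*} [Fintype Ω] [Fintype α] [Fintype β] [Fintype γ]
    (p : Ω → ℝ) (X : Ω → α) (Y : Ω → β) (Z : Ω → γ) : ℝ :=
  entRV p (fun ω => (X ω, Z ω)) + entRV p (fun ω => (Y ω, Z ω))
    - entRV p (fun ω => (X ω, Y ω, Z ω)) - entRV p Z

/-- Independence of two random variables under the pmf `p`. -/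
def IndepRV {Ω α β : Type*} [Fintype Ω] (p : Ω → ℝ) (X : Ω → α) (Y : Ω → β) : Prop :=
  ∀ a b, distRV p (fun ω => (X ω, Y ω)) (a, b) = distRV p X a * distRV p Y b

/-- The auxiliary random variable `V_n = (M, W_{n+1}^N, Y^{n-1})`. -/
def auxV8 {Ω μ 𝒲 𝒴 : Type} {N : ℕ} (M : Ω → μ) (W : Fin N → Ω → 𝒲)
    (Y : Fin N → Ω → 𝒴) (n : Fin N) (ω : Ω) :
    μ × ({k : Fin N // n < k} → 𝒲) × ({k : Fin N // k < n} → 𝒴) :=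
  (M ω, fun k => W k ω, fun k => Y k ω)

/-!
Write `I(V_n;Y_n) - I(V_n;W_n) = H(Y_n) - H(W_n) + H(V_n,W_n) - H(V_n,Y_n)`. Since
`(V_n, W_n)` carries the same information as `(M, W_n^N, Y^{n-1})` and `(V_n, Y_n)` the same as
`(M, W_{n+1}^N, Y^n)`, the last two terms telescope to `H(M, W^N) - H(M, Y^N)`. The independence
hypotheses give `H(M, W^N) = H(M) + Σ H(W_n)`, while
`H(M, Y^N) = H(M | Y^N) + H(Y^N) ≤ N ε + Σ H(Y_n)` by the Fano condition and subadditivity.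
-/

theorem Fin.sum_univ_sub_succ {G : Type*} [AddCommGroup G] (f : ℕ → G) (N : ℕ) :
    ∑ n : Fin N, (f n - f (n + 1)) = f 0 - f N := by
  rw [Fin.sum_univ_eq_sum_range (fun n => f n - f (n + 1)), Finset.sum_range_sub']

theorem neg_mul_logb_mul (b x y : ℝ) :
    -(x * y * logb b (x * y)) = y * -(x * logb b x) + x * -(y * logb b y) := by
  have h := negMulLog_mul x y
  simp only [negMulLog, logb] at h ⊢
  linear_combination h / log b

theorem sub_mul_le_mul_log_sub_log_sub_log {r x y : ℝ} (hr : 0 ≤ r) (hx : r ≤ x) (hy : r ≤ y) :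
    r - x * y ≤ r * (log r - log x - log y) := by
  rcases hr.eq_or_lt with rfl | hr
  · simpa using mul_nonneg hx hy
  have hx₀ := hr.trans_le hx
  have hy₀ := hr.trans_le hy
  have h := log_le_sub_one_of_pos (show 0 < x * y / r by positivity)
  rw [log_div (mul_pos hx₀ hy₀).ne' hr.ne', log_mul hx₀.ne' hy₀.ne'] at h
  have h' : r * (x * y / r - 1) = x * y - r := by field_simp
  nlinarith [mul_le_mul_of_nonneg_left h hr.le]

section Entropy

variable {Ω α β : Type*} [Fintype Ω]

theorem sum_distRV_mul [Fintype α] (p : Ω → ℝ) (X : Ω → α) (f : α → ℝ) :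
    ∑ a, distRV p X a * f a = ∑ ω, p ω * f (X ω) := by
  simp only [distRV, Finset.sum_mul, ite_mul, zero_mul]
  rw [Finset.sum_comm]
  simp

theorem sum_distRV [Fintype α] (p : Ω → ℝ) (X : Ω → α) : ∑ a, distRV p X a = ∑ ω, p ω := by
  simpa using sum_distRV_mul p X 1

theorem distRV_nonneg {p : Ω → ℝ} (hp : ∀ ω, 0 ≤ p ω) (X : Ω → α) (a : α) :
    0 ≤ distRV p X a :=
  Finset.sum_nonneg fun ω _ => by split_ifs <;> simp [hp ω]

theorem distRV_le_distRV_comp {p : Ω → ℝ} (hp : ∀ ω, 0 ≤ p ω) (X : Ω → α) (g : α → β)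
    (a : α) : distRV p X a ≤ distRV p (fun ω => g (X ω)) (g a) :=
  Finset.sum_le_sum fun ω _ => by
    split_ifs <;> simp_all

theorem entRV_eq_neg_sum [Fintype α] (p : Ω → ℝ) (X : Ω → α) :
    entRV p X = -∑ ω, p ω * logb 2 (distRV p X (X ω)) := by
  rw [← sum_distRV_mul p X (fun a => logb 2 (distRV p X a)), entRV, entPMF,
    ← Finset.sum_neg_distrib]

theorem entRV_eq_of_eq_iff_eq [Fintype α] [Fintype β] {p : Ω → ℝ} {X : Ω → α} {Y : Ω → β}
    (h : ∀ ω ω', X ω = X ω' ↔ Y ω = Y ω') : entRV p X = entRV p Y := by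
  simp only [entRV_eq_neg_sum, distRV, h]

theorem entRV_of_subsingleton [Fintype α] [Subsingleton α] {p : Ω → ℝ} (hp : ∑ ω, p ω = 1)
    (X : Ω → α) : entRV p X = 0 := by
  have hX : ∀ ω ω', (X ω = X ω') = True := fun _ _ => eq_true (Subsingleton.elim _ _)
  simp [entRV_eq_neg_sum, distRV, hX, hp]

theorem entRV_pair_eq_add_of_indepRV [Fintype α] [Fintype β] {p : Ω → ℝ}
    (hp : ∑ ω, p ω = 1) {X : Ω → α} {Z : Ω → β} (h : IndepRV p X Z) :
    entRV p (fun ω => (X ω, Z ω)) = entRV p X + entRV p Z := by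
  unfold IndepRV at h
  simp only [entRV, entPMF, Fintype.sum_prod_type, h, neg_mul_logb_mul, Finset.sum_add_distrib,
    ← Finset.mul_sum, ← Finset.sum_mul, sum_distRV, hp, one_mul]

theorem entRV_pair_le_add [Fintype α] [Fintype β] {p : Ω → ℝ} (hp : IsPMF p) (X : Ω → α)
    (Z : Ω → β) : entRV p (fun ω => (X ω, Z ω)) ≤ entRV p X + entRV p Z := by
  set r := distRV p (fun ω => (X ω, Z ω))
  have hX : entRV p X = -∑ c, r c * logb 2 (distRV p X c.1) := by
    rw [sum_distRV_mul, entRV_eq_neg_sum]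
  have hZ : entRV p Z = -∑ c, r c * logb 2 (distRV p Z c.2) := by
    rw [sum_distRV_mul, entRV_eq_neg_sum]
  have hXZ : entRV p (fun ω => (X ω, Z ω)) = -∑ c, r c * logb 2 (r c) := by
    rw [sum_distRV_mul, entRV_eq_neg_sum]
  have hmass : ∑ c : α × β, (r c - distRV p X c.1 * distRV p Z c.2) = 0 := by
    rw [Finset.sum_sub_distrib, sum_distRV, Fintype.sum_prod_type, ← Finset.sum_mul_sum,
      sum_distRV, sum_distRV, hp.2, mul_one, sub_self]
  have gibbs : ∀ c, (r c - distRV p X c.1 * distRV p Z c.2) / log 2 ≤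
      r c * (logb 2 (r c) - logb 2 (distRV p X c.1) - logb 2 (distRV p Z c.2)) := by
    intro c
    have h : r c - distRV p X c.1 * distRV p Z c.2 ≤
        r c * (log (r c) - log (distRV p X c.1) - log (distRV p Z c.2)) :=
      sub_mul_le_mul_log_sub_log_sub_log (distRV_nonneg hp.1 _ c)
        (distRV_le_distRV_comp hp.1 _ Prod.fst c) (distRV_le_distRV_comp hp.1 _ Prod.snd c)
    have hlogb : ∀ t, logb 2 t = log t / log 2 := fun _ => rfl
    rw [hlogb, hlogb, hlogb, ← sub_div, ← sub_div, ← mul_div_assoc]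
    exact div_le_div_of_nonneg_right h (log_nonneg one_le_two)
  have hsum := Finset.sum_le_sum fun c (_ : c ∈ Finset.univ) => gibbs c
  rw [← Finset.sum_div, hmass, zero_div] at hsum
  simp only [mul_sub, Finset.sum_sub_distrib] at hsum
  linarith

theorem entRV_pi_le_sum [Fintype α] {p : Ω → ℝ} (hp : IsPMF p) :
    ∀ {N : ℕ} (Z : Fin N → Ω → α), entRV p (fun ω k => Z k ω) ≤ ∑ n, entRV p (Z n)
  | 0, Z => by simp [entRV_of_subsingleton hp.2]
  | N + 1, Z =>
    calc entRV p (fun ω k => Z k ω)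
        = entRV p (fun ω => (Z 0 ω, fun k : Fin N => Z k.succ ω)) :=
          entRV_eq_of_eq_iff_eq fun ω ω' => by simp [funext_iff, Fin.forall_fin_succ]
      _ ≤ entRV p (Z 0) + entRV p (fun ω (k : Fin N) => Z k.succ ω) := entRV_pair_le_add hp _ _
      _ ≤ entRV p (Z 0) + ∑ k : Fin N, entRV p (Z k.succ) := by
          gcongr; exact entRV_pi_le_sum hp _
      _ = ∑ n, entRV p (Z n) := (Fin.sum_univ_succ fun n => entRV p (Z n)).symm

theorem entRV_pair_pi_eq_add_sum_of_indepRV [Fintype α] [Fintype β] {p : Ω → ℝ}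
    (hp : ∑ ω, p ω = 1) (Z : Ω → β) {N : ℕ} (X : Fin N → Ω → α)
    (hindep : ∀ n : Fin N,
      IndepRV p (X n) (fun ω => (Z ω, fun k : {k : Fin N // n < k} => X k ω))) :
    entRV p (fun ω => (Z ω, fun k => X k ω)) = entRV p Z + ∑ n, entRV p (X n) := by
  let G : ℕ → ℝ := fun m =>
    entRV p (fun ω => (Z ω, fun k : {k : Fin N // m ≤ (k : ℕ)} => X k ω))
  have hstep : ∀ n : Fin N, G n - G (n + 1) = entRV p (X n) := by
    intro n
    have hG : G n = entRV p (fun ω => (X n ω, Z ω, fun k : {k : Fin N // n < k} => X k ω)) :=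
      entRV_eq_of_eq_iff_eq fun ω ω' => by
        simp only [Prod.ext_iff, funext_iff, Subtype.forall, le_iff_eq_or_lt, Fin.val_inj,
          Fin.val_fin_lt, or_imp, forall_and, forall_eq']
        tauto
    rw [hG, entRV_pair_eq_add_of_indepRV hp (hindep n)]
    -- `G (n + 1)` is `H(Z, X_{>n})`: `↑n + 1 ≤ ↑k` and `n < k` are definitionally equal
    exact add_sub_cancel_right _ _
  have h0 : G 0 = entRV p (fun ω => (Z ω, fun k => X k ω)) :=
    entRV_eq_of_eq_iff_eq fun ω ω' => by simp [Prod.ext_iff, funext_iff]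
  have hN : G N = entRV p Z :=
    entRV_eq_of_eq_iff_eq fun ω ω' => by simp [Prod.ext_iff, funext_iff]
  have htel := Fin.sum_univ_sub_succ G N
  rw [Finset.sum_congr rfl fun n _ => hstep n, h0, hN] at htel
  linarith

end Entropy

theorem sum_entRV_auxV8_sub {Ω μ 𝒲 𝒴 : Type} [Fintype Ω] [Fintype μ] [Fintype 𝒲]
    [Fintype 𝒴] (p : Ω → ℝ) {N : ℕ} (M : Ω → μ) (W : Fin N → Ω → 𝒲) (Y : Fin N → Ω → 𝒴) :
    ∑ n, (entRV p (fun ω => (auxV8 M W Y n ω, W n ω)) -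
        entRV p (fun ω => (auxV8 M W Y n ω, Y n ω))) =
      entRV p (fun ω => (M ω, fun k => W k ω)) - entRV p (fun ω => (M ω, fun k => Y k ω)) := by
  let F : ℕ → ℝ := fun m => entRV p (fun ω => (M ω,
    fun k : {k : Fin N // m ≤ (k : ℕ)} => W k ω, fun k : {k : Fin N // (k : ℕ) < m} => Y k ω))
  have hW : ∀ n, entRV p (fun ω => (auxV8 M W Y n ω, W n ω)) = F n := fun n =>
    entRV_eq_of_eq_iff_eq fun ω ω' => by
      simp only [auxV8, Prod.ext_iff, funext_iff, Subtype.forall, le_iff_eq_or_lt, Fin.val_inj,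
        Fin.val_fin_lt, or_imp, forall_and, forall_eq']
      tauto
  have hY : ∀ n, entRV p (fun ω => (auxV8 M W Y n ω, Y n ω)) = F (n + 1) := fun n =>
    entRV_eq_of_eq_iff_eq fun ω ω' => by
      simp only [auxV8, Prod.ext_iff, funext_iff, Subtype.forall, Order.add_one_le_iff,
        Fin.val_fin_lt, Order.lt_add_one_iff, Fin.val_fin_le]
      simp only [le_iff_eq_or_lt, or_imp, forall_and, forall_eq]
      tauto
  have h0 : F 0 = entRV p (fun ω => (M ω, fun k => W k ω)) :=
    entRV_eq_of_eq_iff_eq fun ω ω' => by simp [Prod.ext_iff, funext_iff]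
  have hN : F N = entRV p (fun ω => (M ω, fun k => Y k ω)) :=
    entRV_eq_of_eq_iff_eq fun ω ω' => by simp [Prod.ext_iff, funext_iff]
  simp only [hW, hY, Fin.sum_univ_sub_succ F, h0, hN]

theorem classI_multiletter_converse_general {Ω μ 𝒲 𝒴 : Type}
    [Fintype Ω] [Fintype μ] [Fintype 𝒲] [Fintype 𝒴]
    (p : Ω → ℝ) (hp : IsPMF p) (N : ℕ) (ε : ℝ)
    (M : Ω → μ) (W : Fin N → Ω → 𝒲) (Y : Fin N → Ω → 𝒴)
    (hindep : ∀ n : Fin N,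
      IndepRV p (W n) (fun ω => (M ω, fun k : {k : Fin N // n < k} => W k ω)))
    (hFano : condEnt p M (fun ω => fun n : Fin N => Y n ω) ≤ (N : ℝ) * ε) :
    entRV p M ≤
      (∑ n : Fin N,
        (mutInfo p (auxV8 M W Y n) (Y n) - mutInfo p (auxV8 M W Y n) (W n)))
      + (N : ℝ) * ε := by
  have hsummand : ∀ n, mutInfo p (auxV8 M W Y n) (Y n) - mutInfo p (auxV8 M W Y n) (W n) =
      (entRV p (Y n) - entRV p (W n)) + (entRV p (fun ω => (auxV8 M W Y n ω, W n ω)) -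
        entRV p (fun ω => (auxV8 M W Y n ω, Y n ω))) := fun n => by
    unfold mutInfo
    ring
  have hMW := entRV_pair_pi_eq_add_sum_of_indepRV hp.2 M W hindep
  have hYN := entRV_pi_le_sum hp Y
  unfold condEnt at hFano
  rw [Finset.sum_congr rfl fun n _ => hsummand n, Finset.sum_add_distrib, Finset.sum_sub_distrib,
    sum_entRV_auxV8_sub, hMW]
  linarith

/-- **Multi-letter converse inequality for Class I (single-user rate; key step in
the proof of Theorem 2).** If each `W_n` is independent of
`(M, W_{n+1},…,W_N)` and `H(M | Y^N) ≤ N ε`, then with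
`V_n = (M, W_{n+1}^N, Y^{n-1})` one has
`H(M) ≤ Σ_n [ I(V_n;Y_n) − I(V_n;W_n) ] + N ε`. -/
theorem classI_multiletter_converse {Ω μ 𝒲 𝒴 : Type}
    [Fintype Ω] [Fintype μ] [Fintype 𝒲] [Fintype 𝒴]
    (p : Ω → ℝ) (hp : IsPMF p) (N : ℕ) (hN : 0 < N) (ε : ℝ) (hε : 0 ≤ ε)
    (M : Ω → μ) (W : Fin N → Ω → 𝒲) (Y : Fin N → Ω → 𝒴)
    (hindep : ∀ n : Fin N,
      IndepRV p (W n) (fun ω => (M ω, fun k : {k : Fin N // n < k} => W k ω)))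
    (hFano : condEnt p M (fun ω => fun n : Fin N => Y n ω) ≤ (N : ℝ) * ε) :
    entRV p M ≤
      (∑ n : Fin N,
        (mutInfo p (auxV8 M W Y n) (Y n) - mutInfo p (auxV8 M W Y n) (W n)))
      + (N : ℝ) * ε :=
  classI_multiletter_converse_general p hp N ε M W Y hindep hFano
end
end

section
/- (Identity relating the two Class III outer-bound expressions; proved in Section 5.4.) Let U, V1, V2, W, Y1, Y2 be random variables with values in finite sets. Define I1 = I(V1;Y1|U) − I(V1;Y2|U) + H(W|U,V1); I2 = I(V2;Y2|U) − I(V2;Y1|U) + H(W|U,V2); I1* = I(V1;Y1|U,V2) − I(V1;Y2|U,V2) + H(W|U,V1,V2); and I2* = I(V2;Y2|U,V1) − I(V2;Y1|U,V1) + H(W|U,V1,V2). Then I1 + I2 = I1* + I2* + I(W;V1|U,V2) + I(W;V2|U,V1). -/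
open scoped Classical BigOperators
open Real

noncomputable section

lemma entRV_comp_inj {Ω α β : Type*} [Fintype Ω] [Fintype α] [Fintype β]
    (p : Ω → ℝ) (X : Ω → α) (f : α → β) (hf : Function.Injective f) :
    entRV p (fun ω => f (X ω)) = entRV p X := by
  unfold entRV entPMF distRV
  rw [← Finset.sum_subset (Finset.subset_univ (Finset.univ.image f))]
  · rw [Finset.sum_image (fun a _ b _ h => hf h)]
    apply Finset.sum_congr rfl
    intro a _
    simp only [hf.eq_iff]
  · intro b _ hb
    have h0 : (∑ ω, if f (X ω) = b then p ω else 0) = 0 := by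
      apply Finset.sum_eq_zero
      intro ω _
      rw [if_neg]
      intro h; exact hb (Finset.mem_image.mpr ⟨X ω, Finset.mem_univ _, h⟩)
    rw [h0]; simp

lemma entRV_perm {Ω α β : Type*} [Fintype Ω] [Fintype α] [Fintype β]
    (p : Ω → ℝ) (X : Ω → α) (f : α → β) (g : β → α) (h : ∀ a, g (f a) = a) :
    entRV p (fun ω => f (X ω)) = entRV p X :=
  entRV_comp_inj p X f (Function.LeftInverse.injective h)

/-- **Identity relating the two Class III outer-bound expressions (Section 5.4).**
With `I1 = I(V1;Y1|U) − I(V1;Y2|U) + H(W|U,V1)`,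
`I2 = I(V2;Y2|U) − I(V2;Y1|U) + H(W|U,V2)`,
`I1* = I(V1;Y1|U,V2) − I(V1;Y2|U,V2) + H(W|U,V1,V2)` and
`I2* = I(V2;Y2|U,V1) − I(V2;Y1|U,V1) + H(W|U,V1,V2)`, one has
`I1 + I2 = I1* + I2* + I(W;V1|U,V2) + I(W;V2|U,V1)`. -/
theorem classIII_outer_bound_identity {Ω 𝒰 𝒱1 𝒱2 𝒲 𝒴1 𝒴2 : Type}
    [Fintype Ω] [Fintype 𝒰] [Fintype 𝒱1] [Fintype 𝒱2] [Fintype 𝒲]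
    [Fintype 𝒴1] [Fintype 𝒴2]
    (p : Ω → ℝ) (hp : IsPMF p)
    (U : Ω → 𝒰) (V1 : Ω → 𝒱1) (V2 : Ω → 𝒱2) (W : Ω → 𝒲)
    (Y1 : Ω → 𝒴1) (Y2 : Ω → 𝒴2) :
    (condMutInfo p V1 Y1 U - condMutInfo p V1 Y2 U
        + condEnt p W (fun ω => (U ω, V1 ω)))
      + (condMutInfo p V2 Y2 U - condMutInfo p V2 Y1 U
        + condEnt p W (fun ω => (U ω, V2 ω)))
    = (condMutInfo p V1 Y1 (fun ω => (U ω, V2 ω))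
        - condMutInfo p V1 Y2 (fun ω => (U ω, V2 ω))
        + condEnt p W (fun ω => (U ω, V1 ω, V2 ω)))
      + (condMutInfo p V2 Y2 (fun ω => (U ω, V1 ω))
        - condMutInfo p V2 Y1 (fun ω => (U ω, V1 ω))
        + condEnt p W (fun ω => (U ω, V1 ω, V2 ω)))
      + condMutInfo p W V1 (fun ω => (U ω, V2 ω))
      + condMutInfo p W V2 (fun ω => (U ω, V1 ω)) := by
  simp only [condMutInfo, condEnt]
  have a1 : entRV p (fun ω => (V1 ω, U ω)) = entRV p (fun ω => (U ω, V1 ω)) :=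
    entRV_perm p (fun ω => (U ω, V1 ω)) (fun x => (x.2, x.1)) (fun x => (x.2, x.1)) (fun _ => rfl)
  have a2 : entRV p (fun ω => (Y1 ω, U ω)) = entRV p (fun ω => (U ω, Y1 ω)) :=
    entRV_perm p (fun ω => (U ω, Y1 ω)) (fun x => (x.2, x.1)) (fun x => (x.2, x.1)) (fun _ => rfl)
  have a3 : entRV p (fun ω => (V1 ω, Y1 ω, U ω)) = entRV p (fun ω => (U ω, V1 ω, Y1 ω)) :=
    entRV_perm p (fun ω => (U ω, V1 ω, Y1 ω)) (fun x => (x.2.1, x.2.2, x.1))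
      (fun x => (x.2.2, x.1, x.2.1)) (fun _ => rfl)
  have a4 : entRV p (fun ω => (Y2 ω, U ω)) = entRV p (fun ω => (U ω, Y2 ω)) :=
    entRV_perm p (fun ω => (U ω, Y2 ω)) (fun x => (x.2, x.1)) (fun x => (x.2, x.1)) (fun _ => rfl)
  have a5 : entRV p (fun ω => (V1 ω, Y2 ω, U ω)) = entRV p (fun ω => (U ω, V1 ω, Y2 ω)) :=
    entRV_perm p (fun ω => (U ω, V1 ω, Y2 ω)) (fun x => (x.2.1, x.2.2, x.1))
      (fun x => (x.2.2, x.1, x.2.1)) (fun _ => rfl)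
  have a6 : entRV p (fun ω => (W ω, U ω, V1 ω)) = entRV p (fun ω => (U ω, V1 ω, W ω)) :=
    entRV_perm p (fun ω => (U ω, V1 ω, W ω)) (fun x => (x.2.2, x.1, x.2.1))
      (fun x => (x.2.1, x.2.2, x.1)) (fun _ => rfl)
  have a7 : entRV p (fun ω => (V2 ω, U ω)) = entRV p (fun ω => (U ω, V2 ω)) :=
    entRV_perm p (fun ω => (U ω, V2 ω)) (fun x => (x.2, x.1)) (fun x => (x.2, x.1)) (fun _ => rfl)
  have a8 : entRV p (fun ω => (V2 ω, Y2 ω, U ω)) = entRV p (fun ω => (U ω, V2 ω, Y2 ω)) :=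
    entRV_perm p (fun ω => (U ω, V2 ω, Y2 ω)) (fun x => (x.2.1, x.2.2, x.1))
      (fun x => (x.2.2, x.1, x.2.1)) (fun _ => rfl)
  have a9 : entRV p (fun ω => (V2 ω, Y1 ω, U ω)) = entRV p (fun ω => (U ω, V2 ω, Y1 ω)) :=
    entRV_perm p (fun ω => (U ω, V2 ω, Y1 ω)) (fun x => (x.2.1, x.2.2, x.1))
      (fun x => (x.2.2, x.1, x.2.1)) (fun _ => rfl)
  have a10 : entRV p (fun ω => (W ω, U ω, V2 ω)) = entRV p (fun ω => (U ω, V2 ω, W ω)) :=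
    entRV_perm p (fun ω => (U ω, V2 ω, W ω)) (fun x => (x.2.2, x.1, x.2.1))
      (fun x => (x.2.1, x.2.2, x.1)) (fun _ => rfl)
  have b1 : entRV p (fun ω => (V1 ω, U ω, V2 ω)) = entRV p (fun ω => (U ω, V1 ω, V2 ω)) :=
    entRV_perm p (fun ω => (U ω, V1 ω, V2 ω)) (fun x => (x.2.1, x.1, x.2.2))
      (fun x => (x.2.1, x.1, x.2.2)) (fun _ => rfl)
  have b2 : entRV p (fun ω => (Y1 ω, U ω, V2 ω)) = entRV p (fun ω => (U ω, V2 ω, Y1 ω)) :=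
    entRV_perm p (fun ω => (U ω, V2 ω, Y1 ω)) (fun x => (x.2.2, x.1, x.2.1))
      (fun x => (x.2.1, x.2.2, x.1)) (fun _ => rfl)
  have b3 : entRV p (fun ω => (V1 ω, Y1 ω, U ω, V2 ω))
      = entRV p (fun ω => (U ω, V1 ω, V2 ω, Y1 ω)) :=
    entRV_perm p (fun ω => (U ω, V1 ω, V2 ω, Y1 ω)) (fun x => (x.2.1, x.2.2.2, x.1, x.2.2.1))
      (fun y => (y.2.2.1, y.1, y.2.2.2, y.2.1)) (fun _ => rfl)
  have b4 : entRV p (fun ω => (Y2 ω, U ω, V2 ω)) = entRV p (fun ω => (U ω, V2 ω, Y2 ω)) :=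
    entRV_perm p (fun ω => (U ω, V2 ω, Y2 ω)) (fun x => (x.2.2, x.1, x.2.1))
      (fun x => (x.2.1, x.2.2, x.1)) (fun _ => rfl)
  have b5 : entRV p (fun ω => (V1 ω, Y2 ω, U ω, V2 ω))
      = entRV p (fun ω => (U ω, V1 ω, V2 ω, Y2 ω)) :=
    entRV_perm p (fun ω => (U ω, V1 ω, V2 ω, Y2 ω)) (fun x => (x.2.1, x.2.2.2, x.1, x.2.2.1))
      (fun y => (y.2.2.1, y.1, y.2.2.2, y.2.1)) (fun _ => rfl)
  have b6 : entRV p (fun ω => (W ω, U ω, V1 ω, V2 ω))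
      = entRV p (fun ω => (U ω, V1 ω, V2 ω, W ω)) :=
    entRV_perm p (fun ω => (U ω, V1 ω, V2 ω, W ω)) (fun x => (x.2.2.2, x.1, x.2.1, x.2.2.1))
      (fun y => (y.2.1, y.2.2.1, y.2.2.2, y.1)) (fun _ => rfl)
  have b7 : entRV p (fun ω => (V2 ω, U ω, V1 ω)) = entRV p (fun ω => (U ω, V1 ω, V2 ω)) :=
    entRV_perm p (fun ω => (U ω, V1 ω, V2 ω)) (fun x => (x.2.2, x.1, x.2.1))
      (fun x => (x.2.1, x.2.2, x.1)) (fun _ => rfl)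
  have b8 : entRV p (fun ω => (Y2 ω, U ω, V1 ω)) = entRV p (fun ω => (U ω, V1 ω, Y2 ω)) :=
    entRV_perm p (fun ω => (U ω, V1 ω, Y2 ω)) (fun x => (x.2.2, x.1, x.2.1))
      (fun x => (x.2.1, x.2.2, x.1)) (fun _ => rfl)
  have b9 : entRV p (fun ω => (V2 ω, Y2 ω, U ω, V1 ω))
      = entRV p (fun ω => (U ω, V1 ω, V2 ω, Y2 ω)) :=
    entRV_perm p (fun ω => (U ω, V1 ω, V2 ω, Y2 ω)) (fun x => (x.2.2.1, x.2.2.2, x.1, x.2.1))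
      (fun y => (y.2.2.1, y.2.2.2, y.1, y.2.1)) (fun _ => rfl)
  have b10 : entRV p (fun ω => (Y1 ω, U ω, V1 ω)) = entRV p (fun ω => (U ω, V1 ω, Y1 ω)) :=
    entRV_perm p (fun ω => (U ω, V1 ω, Y1 ω)) (fun x => (x.2.2, x.1, x.2.1))
      (fun x => (x.2.1, x.2.2, x.1)) (fun _ => rfl)
  have b11 : entRV p (fun ω => (V2 ω, Y1 ω, U ω, V1 ω))
      = entRV p (fun ω => (U ω, V1 ω, V2 ω, Y1 ω)) :=
    entRV_perm p (fun ω => (U ω, V1 ω, V2 ω, Y1 ω)) (fun x => (x.2.2.1, x.2.2.2, x.1, x.2.1))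
      (fun y => (y.2.2.1, y.2.2.2, y.1, y.2.1)) (fun _ => rfl)
  have b12 : entRV p (fun ω => (W ω, V1 ω, U ω, V2 ω))
      = entRV p (fun ω => (U ω, V1 ω, V2 ω, W ω)) :=
    entRV_perm p (fun ω => (U ω, V1 ω, V2 ω, W ω)) (fun x => (x.2.2.2, x.2.1, x.1, x.2.2.1))
      (fun y => (y.2.2.1, y.2.1, y.2.2.2, y.1)) (fun _ => rfl)
  have b13 : entRV p (fun ω => (W ω, V2 ω, U ω, V1 ω))
      = entRV p (fun ω => (U ω, V1 ω, V2 ω, W ω)) :=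
    entRV_perm p (fun ω => (U ω, V1 ω, V2 ω, W ω)) (fun x => (x.2.2.2, x.2.2.1, x.1, x.2.1))
      (fun y => (y.2.2.1, y.2.2.2, y.2.1, y.1)) (fun _ => rfl)
  rw [a1, a2, a3, a4, a5, a6, a7, a8, a9, a10, b1, b2, b3, b4, b5, b6, b7, b8, b9, b10,
    b11, b12, b13]
  ring
end
end

section
/- (Equivocation lower bound used in the achievability proof for Class III, equation (20) in Section 4.3.) Let M1, U, V1, V2, Y2 be random variables with values in finite sets. Then the equivocation of M1 given Y2 satisfies H(M1 | Y2) ≥ H(V1 | U) − I(V1; V2 | U) − H(V1 | M1, U, V2, Y2) − I(V1; Y2 | U, V2). -/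
open scoped Classical BigOperators
open Real

noncomputable section

lemma term_bound {q s t u : ℝ} (hq : 0 ≤ q) (hqs : q ≤ s) (hqt : q ≤ t) (hsu : s ≤ u)
    (ht0 : 0 ≤ t) (hu0 : 0 ≤ u) :
    q * (logb 2 s + logb 2 t - logb 2 q - logb 2 u) ≤ (s * t / u - q) / Real.log 2 := by
  have h2 : (0:ℝ) < Real.log 2 := Real.log_pos one_lt_two
  rcases eq_or_lt_of_le hq with h | h
  · rw [← h]
    have hs0 : 0 ≤ s := le_trans hq hqs
    have : (0:ℝ) ≤ s * t / u := by positivity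
    rw [zero_mul]
    apply div_nonneg _ h2.le
    simpa using this
  · have hs' : 0 < s := lt_of_lt_of_le h hqs
    have ht' : 0 < t := lt_of_lt_of_le h hqt
    have hu' : 0 < u := lt_of_lt_of_le hs' hsu
    have hx : 0 < s * t / (q * u) := by positivity
    have hlog := Real.log_le_sub_one_of_pos hx
    have hrw : logb 2 s + logb 2 t - logb 2 q - logb 2 u
        = Real.log (s * t / (q * u)) / Real.log 2 := by
      unfold Real.logb
      rw [Real.log_div (by positivity) (by positivity), Real.log_mul hs'.ne' ht'.ne',
        Real.log_mul h.ne' hu'.ne']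
      ring
    rw [hrw]
    have key : q * Real.log (s * t / (q * u)) ≤ s * t / u - q := by
      calc q * Real.log (s * t / (q * u)) ≤ q * (s * t / (q * u) - 1) :=
            mul_le_mul_of_nonneg_left hlog hq
        _ = s * t / u - q := by field_simp
    calc q * (Real.log (s * t / (q * u)) / Real.log 2)
        = q * Real.log (s * t / (q * u)) / Real.log 2 := by ring
      _ ≤ (s * t / u - q) / Real.log 2 := by gcongr

lemma gibbs {α β γ : Type*} [Fintype α] [Fintype β] [Fintype γ]
    (q : α → β → γ → ℝ) (hq : ∀ a b c, 0 ≤ q a b c)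
    (hsum : ∑ a, ∑ b, ∑ c, q a b c = 1) :
    (∑ a, ∑ b, ∑ c, -(q a b c * logb 2 (q a b c)))
      + (∑ c, -((∑ a, ∑ b, q a b c) * logb 2 (∑ a, ∑ b, q a b c)))
    ≤ (∑ a, ∑ c, -((∑ b, q a b c) * logb 2 (∑ b, q a b c)))
      + (∑ b, ∑ c, -((∑ a, q a b c) * logb 2 (∑ a, q a b c))) := by
  set s : α → γ → ℝ := fun a c => ∑ b, q a b c with hs
  set t : β → γ → ℝ := fun b c => ∑ a, q a b c with ht
  set u : γ → ℝ := fun c => ∑ a, ∑ b, q a b c with hu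
  have hs0 : ∀ a c, 0 ≤ s a c := fun a c => Finset.sum_nonneg fun b _ => hq a b c
  have ht0 : ∀ b c, 0 ≤ t b c := fun b c => Finset.sum_nonneg fun a _ => hq a b c
  have hu0 : ∀ c, 0 ≤ u c := fun c => Finset.sum_nonneg fun a _ => hs0 a c
  have h2 : (0:ℝ) < Real.log 2 := Real.log_pos one_lt_two
  have hHs : (∑ a, ∑ c, -(s a c * logb 2 (s a c)))
      = ∑ a, ∑ b, ∑ c, -(q a b c * logb 2 (s a c)) :=
    Finset.sum_congr rfl fun a _ => by
      calc ∑ c, -(s a c * logb 2 (s a c))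
          = ∑ c, ∑ b, -(q a b c * logb 2 (s a c)) := by
            refine Finset.sum_congr rfl fun c _ => ?_
            rw [Finset.sum_neg_distrib, ← Finset.sum_mul]
        _ = ∑ b, ∑ c, -(q a b c * logb 2 (s a c)) := Finset.sum_comm
  have hHt : (∑ b, ∑ c, -(t b c * logb 2 (t b c)))
      = ∑ a, ∑ b, ∑ c, -(q a b c * logb 2 (t b c)) := by
    calc ∑ b, ∑ c, -(t b c * logb 2 (t b c))
        = ∑ b, ∑ c, ∑ a, -(q a b c * logb 2 (t b c)) := by
          refine Finset.sum_congr rfl fun b _ => Finset.sum_congr rfl fun c _ => ?_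
          rw [Finset.sum_neg_distrib, ← Finset.sum_mul]
      _ = ∑ b, ∑ a, ∑ c, -(q a b c * logb 2 (t b c)) :=
          Finset.sum_congr rfl fun b _ => Finset.sum_comm
      _ = ∑ a, ∑ b, ∑ c, -(q a b c * logb 2 (t b c)) := Finset.sum_comm
  have hHu : (∑ c, -(u c * logb 2 (u c)))
      = ∑ a, ∑ b, ∑ c, -(q a b c * logb 2 (u c)) := by
    calc ∑ c, -(u c * logb 2 (u c))
        = ∑ c, ∑ a, ∑ b, -(q a b c * logb 2 (u c)) := by
          refine Finset.sum_congr rfl fun c _ => ?_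
          have : ∀ a, (∑ b, -(q a b c * logb 2 (u c))) = -(s a c * logb 2 (u c)) := by
            intro a; rw [Finset.sum_neg_distrib, ← Finset.sum_mul]
          simp only [this]
          rw [Finset.sum_neg_distrib, ← Finset.sum_mul]
      _ = ∑ a, ∑ c, ∑ b, -(q a b c * logb 2 (u c)) := Finset.sum_comm
      _ = ∑ a, ∑ b, ∑ c, -(q a b c * logb 2 (u c)) :=
          Finset.sum_congr rfl fun a _ => Finset.sum_comm
  have hpt : ∀ a b c, q a b c * (logb 2 (s a c) + logb 2 (t b c)
        - logb 2 (q a b c) - logb 2 (u c))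
      ≤ (s a c * t b c / u c - q a b c) / Real.log 2 := by
    intro a b c
    refine term_bound (hq a b c) ?_ ?_ ?_ (ht0 b c) (hu0 c)
    · exact Finset.single_le_sum (fun b _ => hq a b c) (Finset.mem_univ b)
    · exact Finset.single_le_sum (fun a _ => hq a b c) (Finset.mem_univ a)
    · exact Finset.single_le_sum (fun a _ => hs0 a c) (Finset.mem_univ a)
  have hsum_le : (∑ a, ∑ b, ∑ c, q a b c * (logb 2 (s a c) + logb 2 (t b c)
        - logb 2 (q a b c) - logb 2 (u c)))
      ≤ ∑ a, ∑ b, ∑ c, (s a c * t b c / u c - q a b c) / Real.log 2 :=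
    Finset.sum_le_sum fun a _ => Finset.sum_le_sum fun b _ =>
      Finset.sum_le_sum fun c _ => hpt a b c
  have hstu : (∑ a, ∑ b, ∑ c, s a c * t b c / u c) ≤ 1 := by
    have h1 : (∑ a, ∑ b, ∑ c, s a c * t b c / u c)
        = ∑ c, (∑ a, s a c) * (∑ b, t b c) / u c := by
      calc (∑ a, ∑ b, ∑ c, s a c * t b c / u c)
          = ∑ a, ∑ c, ∑ b, s a c * t b c / u c :=
            Finset.sum_congr rfl fun a _ => Finset.sum_comm
        _ = ∑ c, ∑ a, ∑ b, s a c * t b c / u c := Finset.sum_comm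
        _ = ∑ c, (∑ a, s a c) * (∑ b, t b c) / u c := by
            refine Finset.sum_congr rfl fun c _ => ?_
            rw [Finset.sum_mul, Finset.sum_div]
            refine Finset.sum_congr rfl fun a _ => ?_
            rw [Finset.mul_sum, Finset.sum_div]
    have h2' : ∀ c, (∑ a, s a c) * (∑ b, t b c) / u c ≤ u c := by
      intro c
      have hsa : (∑ a, s a c) = u c := rfl
      have htb : (∑ b, t b c) = u c := Finset.sum_comm
      rw [hsa, htb]
      rcases eq_or_lt_of_le (hu0 c) with h | h
      · rw [← h]; simp
      · rw [mul_div_assoc, div_self h.ne', mul_one]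
    have h3 : (∑ c, u c) = 1 := by
      rw [← hsum]
      calc ∑ c, ∑ a, ∑ b, q a b c
          = ∑ a, ∑ c, ∑ b, q a b c := Finset.sum_comm
        _ = ∑ a, ∑ b, ∑ c, q a b c :=
            Finset.sum_congr rfl fun a _ => Finset.sum_comm
    rw [h1, ← h3]
    exact Finset.sum_le_sum fun c _ => h2' c
  have hG : (∑ a, ∑ b, ∑ c, (s a c * t b c / u c - q a b c) / Real.log 2) ≤ 0 := by
    have e : (∑ a, ∑ b, ∑ c, (s a c * t b c / u c - q a b c) / Real.log 2)
        = ((∑ a, ∑ b, ∑ c, s a c * t b c / u c)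
            - (∑ a, ∑ b, ∑ c, q a b c)) / Real.log 2 := by
      simp only [sub_div, Finset.sum_sub_distrib, Finset.sum_div]
    rw [e, hsum]
    apply div_nonpos_of_nonpos_of_nonneg _ h2.le
    linarith
  have key : (∑ a, ∑ b, ∑ c, -(q a b c * logb 2 (q a b c)))
      + (∑ a, ∑ b, ∑ c, -(q a b c * logb 2 (u c)))
      - (∑ a, ∑ b, ∑ c, -(q a b c * logb 2 (s a c)))
      - (∑ a, ∑ b, ∑ c, -(q a b c * logb 2 (t b c)))
      = ∑ a, ∑ b, ∑ c, q a b c * (logb 2 (s a c) + logb 2 (t b c)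
          - logb 2 (q a b c) - logb 2 (u c)) := by
    simp only [← Finset.sum_sub_distrib, ← Finset.sum_add_distrib]
    refine Finset.sum_congr rfl fun a _ => Finset.sum_congr rfl fun b _ =>
      Finset.sum_congr rfl fun c _ => by ring
  rw [hHs, hHt, hHu]
  linarith

/-- Nonnegativity of conditional mutual information `I(A;B|C) ≥ 0`. -/
lemma cmi_nonneg {Ω α β γ : Type*} [Fintype Ω] [Fintype α] [Fintype β] [Fintype γ]
    (p : Ω → ℝ) (hp : IsPMF p) (A : Ω → α) (B : Ω → β) (C : Ω → γ) :
    entRV p (fun ω => (A ω, B ω, C ω)) + entRV p C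
      ≤ entRV p (fun ω => (A ω, C ω)) + entRV p (fun ω => (B ω, C ω)) := by
  set q : α → β → γ → ℝ := fun a b c => distRV p (fun ω => (A ω, B ω, C ω)) (a, b, c)
    with hqdef
  have hq : ∀ a b c, 0 ≤ q a b c := by
    intro a b c
    refine Finset.sum_nonneg fun ω _ => ?_
    split <;> simp [hp.1 ω]
  have hAC : ∀ a c, distRV p (fun ω => (A ω, C ω)) (a, c) = ∑ b, q a b c := by
    intro a c
    rw [hqdef]
    unfold distRV
    rw [Finset.sum_comm]
    refine Finset.sum_congr rfl fun ω _ => ?_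
    by_cases h1 : A ω = a <;> by_cases h2 : C ω = c <;>
      simp [h1, h2, Prod.ext_iff, Finset.sum_ite_eq]
  have hBC : ∀ b c, distRV p (fun ω => (B ω, C ω)) (b, c) = ∑ a, q a b c := by
    intro b c
    rw [hqdef]
    unfold distRV
    rw [Finset.sum_comm]
    refine Finset.sum_congr rfl fun ω _ => ?_
    by_cases h1 : B ω = b <;> by_cases h2 : C ω = c <;>
      simp [h1, h2, Prod.ext_iff, Finset.sum_ite_eq]
  have hC : ∀ c, distRV p C c = ∑ a, ∑ b, q a b c := by
    intro c
    rw [hqdef]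
    simp only [distRV]
    conv_rhs => enter [2, a]; rw [Finset.sum_comm]
    conv_rhs => rw [Finset.sum_comm]
    refine Finset.sum_congr rfl fun ω _ => ?_
    by_cases h2 : C ω = c <;>
      simp [h2, Prod.ext_iff, ite_and, Finset.sum_ite_eq, Finset.sum_ite_eq']
  have hsum : ∑ a, ∑ b, ∑ c, q a b c = 1 := by
    have hone : (∑ c, distRV p C c) = 1 := by
      unfold distRV
      rw [Finset.sum_comm]
      rw [← hp.2]
      exact Finset.sum_congr rfl fun ω _ => by simp [Finset.sum_ite_eq]
    calc ∑ a, ∑ b, ∑ c, q a b c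
        = ∑ a, ∑ c, ∑ b, q a b c := Finset.sum_congr rfl fun a _ => Finset.sum_comm
      _ = ∑ c, ∑ a, ∑ b, q a b c := Finset.sum_comm
      _ = ∑ c, distRV p C c := Finset.sum_congr rfl fun c _ => (hC c).symm
      _ = 1 := hone
  have hABC : entRV p (fun ω => (A ω, B ω, C ω))
      = ∑ a, ∑ b, ∑ c, -(q a b c * logb 2 (q a b c)) := by
    unfold entRV entPMF
    rw [Fintype.sum_prod_type]
    exact Finset.sum_congr rfl fun a _ => by rw [Fintype.sum_prod_type]
  have hEC : entRV p C
      = ∑ c, -((∑ a, ∑ b, q a b c) * logb 2 (∑ a, ∑ b, q a b c)) := by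
    unfold entRV entPMF
    exact Finset.sum_congr rfl fun c _ => by rw [hC c]
  have hEAC : entRV p (fun ω => (A ω, C ω))
      = ∑ a, ∑ c, -((∑ b, q a b c) * logb 2 (∑ b, q a b c)) := by
    unfold entRV entPMF
    rw [Fintype.sum_prod_type]
    exact Finset.sum_congr rfl fun a _ => Finset.sum_congr rfl fun c _ => by rw [hAC a c]
  have hEBC : entRV p (fun ω => (B ω, C ω))
      = ∑ b, ∑ c, -((∑ a, q a b c) * logb 2 (∑ a, q a b c)) := by
    unfold entRV entPMF
    rw [Fintype.sum_prod_type]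
    exact Finset.sum_congr rfl fun b _ => Finset.sum_congr rfl fun c _ => by rw [hBC b c]
  rw [hABC, hEC, hEAC, hEBC]
  exact gibbs q hq hsum

/-- Adding a coordinate cannot decrease entropy: `H(Y) ≤ H(X,Y)`. -/
lemma ent_pair_ge {Ω α β : Type*} [Fintype Ω] [Fintype α] [Fintype β]
    (p : Ω → ℝ) (hp : IsPMF p) (X : Ω → α) (Y : Ω → β) :
    entRV p Y ≤ entRV p (fun ω => (X ω, Y ω)) := by
  have h : entRV p (fun ω => (X ω, X ω, Y ω)) + entRV p Y
      ≤ entRV p (fun ω => (X ω, Y ω)) + entRV p (fun ω => (X ω, Y ω)) :=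
    cmi_nonneg p hp X X Y
  have e2 : entRV p (fun ω => (X ω, X ω, Y ω)) = entRV p (fun ω => (X ω, Y ω)) :=
    entRV_comp_inj p (fun ω => (X ω, Y ω)) (fun x => (x.1, x.1, x.2))
      (fun a b h => by simp only [Prod.ext_iff] at h ⊢; tauto)
  linarith

/-- **Equivocation lower bound used in the achievability proof for Class III
(equation (20), Section 4.3).** For arbitrary finite-valued random variables,
`H(M1|Y2) ≥ H(V1|U) − I(V1;V2|U) − H(V1|M1,U,V2,Y2) − I(V1;Y2|U,V2)`. -/
theorem classIII_equivocation_lower_bound {Ω μ1 𝒰 𝒱1 𝒱2 𝒴2 : Type}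
    [Fintype Ω] [Fintype μ1] [Fintype 𝒰] [Fintype 𝒱1] [Fintype 𝒱2] [Fintype 𝒴2]
    (p : Ω → ℝ) (hp : IsPMF p)
    (M1 : Ω → μ1) (U : Ω → 𝒰) (V1 : Ω → 𝒱1) (V2 : Ω → 𝒱2) (Y2 : Ω → 𝒴2) :
    condEnt p V1 U - condMutInfo p V1 V2 U
      - condEnt p V1 (fun ω => (M1 ω, U ω, V2 ω, Y2 ω))
      - condMutInfo p V1 Y2 (fun ω => (U ω, V2 ω))
    ≤ condEnt p M1 Y2 := by
  simp only [condEnt, condMutInfo]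
  have E1 : entRV p (fun ω => (V2 ω, U ω)) = entRV p (fun ω => (U ω, V2 ω)) :=
    entRV_comp_inj p (fun ω => (U ω, V2 ω)) (fun x => (x.2, x.1))
      (fun a b h => by simp only [Prod.ext_iff] at h ⊢; tauto)
  have E2 : entRV p (fun ω => (V1 ω, V2 ω, U ω)) = entRV p (fun ω => (V1 ω, U ω, V2 ω)) :=
    entRV_comp_inj p (fun ω => (V1 ω, U ω, V2 ω)) (fun x => (x.1, x.2.2, x.2.1))
      (fun a b h => by simp only [Prod.ext_iff] at h ⊢; tauto)
  have E3 : entRV p (fun ω => (Y2 ω, U ω, V2 ω))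
      = entRV p (fun ω => ((U ω, V2 ω), Y2 ω)) :=
    entRV_comp_inj p (fun ω => ((U ω, V2 ω), Y2 ω)) (fun x => (x.2, x.1))
      (fun a b h => by simp only [Prod.ext_iff] at h ⊢; tauto)
  have E5 : entRV p (fun ω => (V1 ω, M1 ω, U ω, V2 ω, Y2 ω))
      = entRV p (fun ω => (M1 ω, V1 ω, U ω, V2 ω, Y2 ω)) :=
    entRV_comp_inj p (fun ω => (M1 ω, V1 ω, U ω, V2 ω, Y2 ω))
      (fun x => (x.2.1, x.1, x.2.2))
      (fun a b h => by simp only [Prod.ext_iff] at h ⊢; tauto)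
  have E6 : entRV p (fun ω => (V1 ω, U ω, V2 ω, Y2 ω))
      = entRV p (fun ω => (V1 ω, Y2 ω, U ω, V2 ω)) :=
    entRV_comp_inj p (fun ω => (V1 ω, Y2 ω, U ω, V2 ω))
      (fun x => (x.1, x.2.2.1, x.2.2.2, x.2.1))
      (fun a b h => by simp only [Prod.ext_iff] at h ⊢; tauto)
  have E7 : entRV p (fun ω => (M1 ω, U ω, V2 ω, Y2 ω))
      = entRV p (fun ω => (M1 ω, (U ω, V2 ω), Y2 ω)) :=
    entRV_comp_inj p (fun ω => (M1 ω, (U ω, V2 ω), Y2 ω))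
      (fun x => (x.1, x.2.1.1, x.2.1.2, x.2.2))
      (fun a b h => by simp only [Prod.ext_iff] at h ⊢; tauto)
  have hI : entRV p (fun ω => (V1 ω, U ω, V2 ω, Y2 ω))
      ≤ entRV p (fun ω => (M1 ω, V1 ω, U ω, V2 ω, Y2 ω)) :=
    ent_pair_ge p hp M1 (fun ω => (V1 ω, U ω, V2 ω, Y2 ω))
  have hII : entRV p (fun ω => (M1 ω, (U ω, V2 ω), Y2 ω)) + entRV p Y2
      ≤ entRV p (fun ω => (M1 ω, Y2 ω)) + entRV p (fun ω => ((U ω, V2 ω), Y2 ω)) :=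
    cmi_nonneg p hp M1 (fun ω => (U ω, V2 ω)) Y2
  linarith
end
end
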